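/- T(E) decomposes as the internal direct sum of A-modules T(E) = S̃(E) ⊕ I_W. -/

import Mathlib

/-!
Context: `A` a commutative ring, `lam ∈ A`, `E` a finite free `A`-module with basis
`e : Fin (ν+ν') → E`, `ω` an alternating `A`-bilinear form.  `I_W ⊆ T(E)` is the
two-sided ideal generated by the elements `x ⊗ y − y ⊗ x − lam·ω(x,y)`, realized as
the `A`-submodule spanned by `a * (x ⊗ y − y ⊗ x − lam·ω(x,y)) * b`.  `S̃(E)` is the
`A`-submodule of `T(E)` spanned by the tensors `e_I` over nonincreasing sequences `I`.
-/

/-- `e_I = e_{i₁} ⊗ ⋯ ⊗ e_{i_p} ∈ T(E)` for a list of indices `I` (with `e_∅ = 1`). -/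
noncomputable def eTensor {A : Type*} [CommRing A] {E : Type*} [AddCommGroup E] [Module A E]
    {n : ℕ} (e : Module.Basis (Fin n) A E) (I : List (Fin n)) : TensorAlgebra A E :=
  (I.map fun i => TensorAlgebra.ι A (e i)).prod

/-- `S̃(E)`: the `A`-submodule of `T(E)` spanned by the tensors `e_I` over all
nonincreasing sequences `I`. -/
noncomputable def stilde {A : Type*} [CommRing A] {E : Type*} [AddCommGroup E] [Module A E]
    {n : ℕ} (e : Module.Basis (Fin n) A E) : Submodule A (TensorAlgebra A E) :=
  Submodule.span A {t | ∃ I : List (Fin n), List.Pairwise (· ≥ ·) I ∧ t = eTensor e I}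

/-- The two-sided ideal `I_W ⊆ T(E)` generated by the elements
`x ⊗ y − y ⊗ x − lam·ω(x,y)`, viewed as an `A`-submodule of `T(E)`. -/
def IW {A : Type*} [CommRing A] {E : Type*} [AddCommGroup E] [Module A E]
    (lam : A) (ω : E →ₗ[A] E →ₗ[A] A) : Submodule A (TensorAlgebra A E) :=
  Submodule.span A {t | ∃ (a b : TensorAlgebra A E) (x y : E),
    t = a * (TensorAlgebra.ι A x * TensorAlgebra.ι A y -
      TensorAlgebra.ι A y * TensorAlgebra.ι A x -
      algebraMap A (TensorAlgebra A E) (lam * ω x y)) * b}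

/-!
Spanning: a tensor `e_L` is straightened modulo `I_W` by swapping an adjacent pair `a < b`,
`e_{P a b Q} = e_{P b a Q} + λ ω(e_a, e_b) e_{P Q} + e_P (e_a e_b - e_b e_a - λ ω(e_a, e_b)) e_Q`,
which lowers (length, number of ascending pairs) lexicographically.

Independence: writing `ω(e_i, e_j) = β_ij - β_ji` with `β` strictly upper triangular, the
operators `X_i + λ ∑_j β_ij ∂_j` on `A[X_1, …, X_n]` satisfy the Weyl relations, so `T(E)` acts
with `I_W` acting by zero. On `1`, a nonincreasing `e_I` produces the monomial `X^I`: the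
derivative part of `e_i` only involves variables `X_j` with `j > i`, which are absent from the
monomial built so far. Distinct nonincreasing sequences give distinct monomials.
-/

namespace WeylPBW

section Inversions

variable {α : Type*} [LinearOrder α]

def countLtPairs : List α → ℕ
  | [] => 0
  | a :: l => l.countP (a < ·) + countLtPairs l

theorem countLtPairs_swap {a b : α} (hab : a < b) :
    ∀ P Q : List α, countLtPairs (P ++ b :: a :: Q) < countLtPairs (P ++ a :: b :: Q)
  | [], Q => by
    simp [countLtPairs, hab, not_lt.2 hab.le]
    omega
  | x :: P, Q => by
    have hperm : (P ++ b :: a :: Q).Perm (P ++ a :: b :: Q) :=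
      (List.Perm.swap a b Q).append_left P
    simp only [List.cons_append, countLtPairs, hperm.countP_eq]
    have := countLtPairs_swap hab P Q
    omega

theorem exists_append_lt_of_not_pairwise_ge {L : List α} (h : ¬ L.Pairwise (· ≥ ·)) :
    ∃ P a b Q, a < b ∧ L = P ++ a :: b :: Q := by
  rw [← List.isChain_iff_pairwise, List.isChain_iff_forall_rel_of_append_cons_cons] at h
  push Not at h
  obtain ⟨a, b, P, Q, hL, hab⟩ := h
  exact ⟨P, a, b, Q, hab, hL⟩

theorem injective_toFinsupp_of_pairwise_ge :
    Function.Injective fun I : {I : List α // I.Pairwise (· ≥ ·)} =>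
      Multiset.toFinsupp ((I : List α) : Multiset α) :=
  fun I J h => Subtype.ext <| List.Perm.eq_of_pairwise' I.2 J.2 <|
    Multiset.coe_eq_coe.1 (Multiset.toFinsupp.injective h)

end Inversions

variable {A : Type*} [CommRing A] {E : Type*} [AddCommGroup E] [Module A E] {n : ℕ}
  (lam : A) (ω : E →ₗ[A] E →ₗ[A] A) (e : Module.Basis (Fin n) A E)

section Spanning

theorem eTensor_append (P Q : List (Fin n)) :
    eTensor e (P ++ Q) = eTensor e P * eTensor e Q := by
  simp [eTensor]

theorem eTensor_cons (i : Fin n) (I : List (Fin n)) :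
    eTensor e (i :: I) = TensorAlgebra.ι A (e i) * eTensor e I := by
  simp [eTensor]

theorem tensorAlgebra_basis_apply (w : FreeMonoid (Fin n)) :
    e.tensorAlgebra w = eTensor e w.toList := by
  simp [Module.Basis.tensorAlgebra, eTensor, FreeAlgebra.basisFreeMonoid,
    FreeAlgebra.equivMonoidAlgebraFreeMonoid, FreeMonoid.lift_apply, map_list_prod,
    Function.comp_def]

theorem span_range_eTensor : Submodule.span A (Set.range (eTensor e)) = ⊤ := by
  refine eq_top_iff.2 (e.tensorAlgebra.span_eq ▸ Submodule.span_mono ?_)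
  rintro _ ⟨w, rfl⟩
  exact ⟨w.toList, (tensorAlgebra_basis_apply e w).symm⟩

def weylRel (x y : E) : TensorAlgebra A E :=
  TensorAlgebra.ι A x * TensorAlgebra.ι A y - TensorAlgebra.ι A y * TensorAlgebra.ι A x -
    algebraMap A (TensorAlgebra A E) (lam * ω x y)

theorem mul_weylRel_mul_mem_IW (a b : TensorAlgebra A E) (x y : E) :
    a * weylRel lam ω x y * b ∈ IW lam ω :=
  Submodule.subset_span ⟨a, b, x, y, rfl⟩

theorem eTensor_swap (a b : Fin n) (P Q : List (Fin n)) :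
    eTensor e (P ++ a :: b :: Q) = eTensor e (P ++ b :: a :: Q)
      + (lam * ω (e a) (e b)) • eTensor e (P ++ Q)
      + eTensor e P * weylRel lam ω (e a) (e b) * eTensor e Q := by
  simp only [weylRel, eTensor_append, eTensor_cons, Algebra.algebraMap_eq_smul_one, mul_sub,
    sub_mul, mul_smul_comm, smul_mul_assoc, mul_one, mul_assoc]
  abel

theorem eTensor_mem_stilde_sup_IW (L : List (Fin n)) : eTensor e L ∈ stilde e ⊔ IW lam ω := by
  by_cases hL : L.Pairwise (· ≥ ·)
  · exact Submodule.mem_sup_left (Submodule.subset_span ⟨L, hL, rfl⟩)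
  obtain ⟨P, a, b, Q, hab, rfl⟩ := exists_append_lt_of_not_pairwise_ge hL
  rw [eTensor_swap]
  exact add_mem (add_mem (eTensor_mem_stilde_sup_IW (P ++ b :: a :: Q))
    (Submodule.smul_mem _ _ (eTensor_mem_stilde_sup_IW (P ++ Q))))
    (Submodule.mem_sup_right (mul_weylRel_mul_mem_IW lam ω _ _ _ _))
termination_by (L.length, countLtPairs L)
decreasing_by
  · subst_vars; simp_wf; exact Prod.Lex.right _ (countLtPairs_swap hab P Q)
  · subst_vars; simp_wf; exact Prod.Lex.left _ _ (by omega)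

theorem stilde_sup_IW_eq_top : stilde e ⊔ IW lam ω = ⊤ :=
  eq_top_iff.2 <| (span_range_eTensor e).symm.le.trans <|
    Submodule.span_le.2 <| Set.range_subset_iff.2 (eTensor_mem_stilde_sup_IW lam ω e)

end Spanning

section WeylRelations

variable {B : Type*} [Ring B] [Algebra A B]

theorem IW_le_ker_lift (f : E →ₗ[A] B)
    (hf : ∀ x y, f x * f y - f y * f x = algebraMap A B (lam * ω x y)) :
    IW lam ω ≤ LinearMap.ker (TensorAlgebra.lift A f).toLinearMap :=
  Submodule.span_le.2 <| by
    rintro _ ⟨a, b, x, y, rfl⟩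
    simp [hf]

theorem commutator_eq_of_basis {ι : Type*} (b : Module.Basis ι A E) (f : E →ₗ[A] B)
    (hf : ∀ i j, f (b i) * f (b j) - f (b j) * f (b i) = algebraMap A B (lam * ω (b i) (b j)))
    (x y : E) : f x * f y - f y * f x = algebraMap A B (lam * ω x y) := by
  have h := LinearMap.ext_basis b b
    (B := (LinearMap.mul A B).compl₁₂ f f - ((LinearMap.mul A B).compl₁₂ f f).flip)
    (B' := (lam • ω).compr₂ (Algebra.linearMap A B)) (by simpa using hf)
  simpa using LinearMap.congr_fun₂ h x y

end WeylRelations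

section Representation

open MvPolynomial

noncomputable def upperCoeff (i j : Fin n) : A := if i < j then ω (e i) (e j) else 0

theorem upperCoeff_sub_upperCoeff (halt : ω.IsAlt) (i j : Fin n) :
    upperCoeff ω e i j - upperCoeff ω e j i = ω (e i) (e j) := by
  unfold upperCoeff
  rcases lt_trichotomy i j with h | rfl | h
  · simp [h, h.not_gt]
  · simp [halt.self_eq_zero]
  · simp [h, h.not_gt, ← halt.neg (e i) (e j)]

noncomputable def upperDeriv (i : Fin n) :
    Derivation A (MvPolynomial (Fin n) A) (MvPolynomial (Fin n) A) :=
  mkDerivation A fun j => C (upperCoeff ω e i j)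

theorem upperDeriv_X_mul (i j : Fin n) (p : MvPolynomial (Fin n) A) :
    upperDeriv ω e i (X j * p) = X j * upperDeriv ω e i p + C (upperCoeff ω e i j) * p := by
  simp [upperDeriv, Derivation.leibniz, mul_comm, add_comm]

theorem upperDeriv_comm (i j : Fin n) (p : MvPolynomial (Fin n) A) :
    upperDeriv ω e i (upperDeriv ω e j p) = upperDeriv ω e j (upperDeriv ω e i p) := by
  have h : ⁅upperDeriv ω e i, upperDeriv ω e j⁆ = 0 :=
    derivation_ext fun k => by simp [Derivation.commutator_apply, upperDeriv, derivation_C]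
  simpa [Derivation.commutator_apply, sub_eq_zero] using congr($h p)

noncomputable def weylOp (i : Fin n) : Module.End A (MvPolynomial (Fin n) A) :=
  LinearMap.mulLeft A (X i) + lam • (upperDeriv ω e i : Module.End A (MvPolynomial (Fin n) A))

theorem weylOp_comm (halt : ω.IsAlt) (i j : Fin n) :
    weylOp lam ω e i * weylOp lam ω e j - weylOp lam ω e j * weylOp lam ω e i =
      algebraMap A _ (lam * ω (e i) (e j)) := by
  refine LinearMap.ext fun p => ?_
  simp only [weylOp, LinearMap.sub_apply, Module.End.mul_apply, LinearMap.add_apply,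
    LinearMap.smul_apply, LinearMap.mulLeft_apply, Derivation.coeFn_coe, map_add,
    map_smul, upperDeriv_X_mul, upperDeriv_comm ω e i j, Module.algebraMap_end_apply,
    ← upperCoeff_sub_upperCoeff ω e halt i j]
  simp only [smul_eq_C_mul, map_mul, map_sub]
  ring

theorem weylOp_monomial {i : Fin n} {s : Fin n →₀ ℕ} (hs : ∀ k ∈ s.support, k ≤ i) :
    weylOp lam ω e i (monomial s 1) = monomial (Finsupp.single i 1 + s) 1 := by
  have hD : upperDeriv ω e i (monomial s 1) = 0 := by
    rw [upperDeriv, mkDerivation_monomial, Finsupp.sum, Finset.sum_eq_zero, smul_zero]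
    intro k hk
    simp [upperCoeff, not_lt.2 (hs k hk)]
  simp [weylOp, hD, X, monomial_mul]

noncomputable def toPoly : TensorAlgebra A E →ₗ[A] MvPolynomial (Fin n) A :=
  LinearMap.applyₗ 1 ∘ₗ (TensorAlgebra.lift A (e.constr A (weylOp lam ω e))).toLinearMap

theorem IW_le_ker_toPoly (halt : ω.IsAlt) : IW lam ω ≤ LinearMap.ker (toPoly lam ω e) :=
  (IW_le_ker_lift lam ω _ <| commutator_eq_of_basis lam ω e _ fun i j => by
    simpa using weylOp_comm lam ω e halt i j).trans (LinearMap.ker_le_ker_comp _ _)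

theorem toPoly_eTensor_cons (i : Fin n) (I : List (Fin n)) :
    toPoly lam ω e (eTensor e (i :: I)) = weylOp lam ω e i (toPoly lam ω e (eTensor e I)) := by
  simp [toPoly, eTensor_cons]

theorem toPoly_eTensor_of_pairwise {I : List (Fin n)} (hI : I.Pairwise (· ≥ ·)) :
    toPoly lam ω e (eTensor e I) = monomial (Multiset.toFinsupp I) 1 := by
  induction I with
  | nil => simp [toPoly, eTensor]
  | cons i I ih =>
    rw [List.pairwise_cons] at hI
    rw [toPoly_eTensor_cons, ih hI.2, weylOp_monomial]
    · rw [← Multiset.cons_coe, ← Multiset.singleton_add, Multiset.toFinsupp_add,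
        Multiset.toFinsupp_singleton]
    · simpa using hI.1

theorem linearIndependent_toPoly_eTensor :
    LinearIndependent A (toPoly lam ω e ∘ fun I : {I : List (Fin n) // I.Pairwise (· ≥ ·)} =>
      eTensor e I) := by
  have h : toPoly lam ω e ∘ (fun I : {I : List (Fin n) // I.Pairwise (· ≥ ·)} => eTensor e I) =
      basisMonomials (Fin n) A ∘ fun I => Multiset.toFinsupp (I.1 : Multiset (Fin n)) :=
    funext fun I => by simp [toPoly_eTensor_of_pairwise lam ω e I.2, coe_basisMonomials]
  rw [h]
  exact (basisMonomials (Fin n) A).linearIndependent.comp _ injective_toFinsupp_of_pairwise_ge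

theorem disjoint_stilde_IW (halt : ω.IsAlt) : Disjoint (stilde e) (IW lam ω) := by
  have hS : stilde e = Submodule.span A
      (Set.range fun I : {I : List (Fin n) // I.Pairwise (· ≥ ·)} => eTensor e I) := by
    simp only [stilde, Set.range, Subtype.exists, exists_prop, eq_comm]
  rw [hS]
  exact (Submodule.range_ker_disjoint (linearIndependent_toPoly_eTensor lam ω e)).mono_right
    (IW_le_ker_toPoly lam ω e halt)

end Representation
end WeylPBW

/-- `T(E)` decomposes as the internal direct sum of `A`-modules
`T(E) = S̃(E) ⊕ I_W`. -/
theorem stmt3 (A : Type*) [CommRing A] (E : Type*) [AddCommGroup E] [Module A E]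
    (lam : A) (ω : E →ₗ[A] E →ₗ[A] A) (halt : ∀ x : E, ω x x = 0)
    (ν ν' : ℕ) (e : Module.Basis (Fin (ν + ν')) A E) :
    IsCompl (stilde e) (IW lam ω) :=
  ⟨WeylPBW.disjoint_stilde_IW lam ω e halt,
    codisjoint_iff.2 (WeylPBW.stilde_sup_IW_eq_top lam ω e)⟩
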